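/- Let α > 0, β > 0 and σ > 0, and define ỹ(σ, z) = exp(β z (1/σ - 1)) for z > 0. Then the function z ↦ (ỹ(σ,z) log ỹ(σ,z) - ỹ(σ,z) + 1) · (α/z) · exp(-β z / σ) is integrable on (0, ∞), and ∫₀^∞ (ỹ(σ,z) log ỹ(σ,z) - ỹ(σ,z) + 1) · (α/z) · exp(-β z / σ) dz = α (1/σ - 1 + log σ). -/

import Mathlib

/-!
With `c = β (1/σ - 1)` we have `ỹ log ỹ = c z ỹ` and `ỹ e^{-βz/σ} = e^{-βz}`, so the integrand is
`α c e^{-βz} + α (e^{-βz/σ} - e^{-βz}) / z`. The first term integrates to `α c / β = α (1/σ - 1)`,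
the second is a Frullani integral with value `α log (β / (β/σ)) = α log σ`. Integrability of the
Frullani integrand comes from `e^{-az} - e^{-bz} ≤ (b - a) z e^{-az}`.
-/

open Real MeasureTheory Set Filter Topology

lemma exp_neg_mul_sub_exp_neg_mul_le (a b z : ℝ) :
    exp (-(a * z)) - exp (-(b * z)) ≤ (b - a) * z * exp (-(a * z)) := by
  have hsplit : exp (-(b * z)) = exp (-(a * z)) * exp (-((b - a) * z)) := by
    rw [← exp_add]; ring_nf
  nlinarith [one_sub_le_exp_neg ((b - a) * z), exp_pos (-(a * z))]

lemma integrableOn_Ioi_inv_mul_exp_neg_mul_sub_of_le {a b : ℝ} (ha : 0 < a) (hab : a ≤ b) :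
    IntegrableOn (fun z : ℝ => z⁻¹ * (exp (-(a * z)) - exp (-(b * z)))) (Ioi 0) := by
  have hmeas : AEStronglyMeasurable (fun z : ℝ => z⁻¹ * (exp (-(a * z)) - exp (-(b * z))))
      (volume.restrict (Ioi 0)) :=
    (ContinuousOn.mul (continuousOn_inv₀.mono fun _ hz => ne_of_gt hz)
      (by fun_prop)).aestronglyMeasurable measurableSet_Ioi
  refine ((exp_neg_integrableOn_Ioi 0 ha).const_mul (b - a)).mono' hmeas ?_
  filter_upwards [self_mem_ae_restrict measurableSet_Ioi] with z (hz : 0 < z)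
  have hdiff : 0 ≤ exp (-(a * z)) - exp (-(b * z)) :=
    sub_nonneg.2 (exp_le_exp.2 (by nlinarith))
  rw [norm_of_nonneg (mul_nonneg (inv_nonneg.2 hz.le) hdiff), inv_mul_le_iff₀ hz, neg_mul]
  linarith [exp_neg_mul_sub_exp_neg_mul_le a b z]

lemma integrableOn_Ioi_inv_mul_exp_neg_mul_sub {a b : ℝ} (ha : 0 < a) (hb : 0 < b) :
    IntegrableOn (fun z : ℝ => z⁻¹ * (exp (-(a * z)) - exp (-(b * z)))) (Ioi 0) := by
  rcases le_total a b with hab | hba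
  · exact integrableOn_Ioi_inv_mul_exp_neg_mul_sub_of_le ha hab
  · refine (integrableOn_Ioi_inv_mul_exp_neg_mul_sub_of_le hb hba).neg.congr_fun
      (fun z _ => ?_) measurableSet_Ioi
    simp only [Pi.neg_apply]
    ring

lemma integral_Ioi_inv_mul_exp_neg_mul_sub {a b : ℝ} (ha : 0 < a) (hb : 0 < b) :
    ∫ z in Ioi 0, z⁻¹ * (exp (-(a * z)) - exp (-(b * z))) = Real.log (b / a) := by
  have hL : Tendsto (fun x : ℝ => exp (-x)) (𝓝[>] 0) (𝓝 1) :=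
    (continuous_neg.rexp.tendsto' 0 1 (by simp)).mono_left nhdsWithin_le_nhds
  have hR : Tendsto (fun x : ℝ => exp (-x)) atTop (𝓝 0) :=
    tendsto_exp_neg_atTop_nhds_zero
  have hloc : LocallyIntegrableOn (fun x : ℝ => exp (-x)) (Ioi 0) :=
    continuous_neg.rexp.locallyIntegrable.locallyIntegrableOn _
  simpa using Frullani.integral_Ioi_eq hloc ha hb hL hR
    (integrableOn_Ioi_inv_mul_exp_neg_mul_sub ha hb)

lemma inverse_integrand_eq_exp_add_frullani (α β : ℝ) {σ z : ℝ} (hσ : σ ≠ 0) (hz : z ≠ 0) :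
    (exp (β * z * (1 / σ - 1)) * Real.log (exp (β * z * (1 / σ - 1)))
        - exp (β * z * (1 / σ - 1)) + 1) * (α / z) * exp (-β * z / σ) =
      α * (β * (1 / σ - 1)) * exp (-β * z) +
        α * (z⁻¹ * (exp (-(β / σ * z)) - exp (-(β * z)))) := by
  have hy : exp (β * z * (1 / σ - 1)) * exp (-(β / σ * z)) = exp (-(β * z)) := by
    rw [← exp_add]; congr 1; field_simp; ring
  rw [Real.log_exp, show -β * z / σ = -(β / σ * z) by ring, neg_mul, ← hy]
  field_simp
  ring

theorem lepingle_memin_integrand_inverse_general (α β σ : ℝ) (hβ : 0 < β) (hσ : 0 < σ) :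
    IntegrableOn
        (fun z : ℝ =>
          (exp (β * z * (1 / σ - 1)) * Real.log (exp (β * z * (1 / σ - 1)))
            - exp (β * z * (1 / σ - 1)) + 1) * (α / z) * exp (-β * z / σ))
        (Set.Ioi 0) ∧
      ∫ z in Set.Ioi (0:ℝ),
          (exp (β * z * (1 / σ - 1)) * Real.log (exp (β * z * (1 / σ - 1)))
            - exp (β * z * (1 / σ - 1)) + 1) * (α / z) * exp (-β * z / σ) =
        α * (1 / σ - 1 + Real.log σ) := by
  have hexp := integrableOn_exp_mul_Ioi (neg_lt_zero.2 hβ) 0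
  have hfrullani := integrableOn_Ioi_inv_mul_exp_neg_mul_sub (div_pos hβ hσ) hβ
  have hsplit := fun z (hz : z ∈ Ioi (0 : ℝ)) =>
    inverse_integrand_eq_exp_add_frullani α β hσ.ne' (ne_of_gt hz)
  have hsum := (hexp.const_mul (α * (β * (1 / σ - 1)))).add (hfrullani.const_mul α)
  refine ⟨IntegrableOn.congr_fun hsum (fun z hz => (hsplit z hz).symm) measurableSet_Ioi, ?_⟩
  rw [setIntegral_congr_fun measurableSet_Ioi hsplit,
    integral_add (hexp.const_mul _) (hfrullani.const_mul α), integral_const_mul,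
    integral_const_mul, integral_exp_mul_Ioi (neg_lt_zero.2 hβ),
    integral_Ioi_inv_mul_exp_neg_mul_sub (div_pos hβ hσ) hβ, div_div_cancel₀ hβ.ne',
    mul_zero, exp_zero]
  field_simp

theorem lepingle_memin_integrand_inverse (α β σ : ℝ) (hα : 0 < α) (hβ : 0 < β) (hσ : 0 < σ) :
    IntegrableOn
        (fun z : ℝ =>
          (exp (β * z * (1 / σ - 1)) * Real.log (exp (β * z * (1 / σ - 1)))
            - exp (β * z * (1 / σ - 1)) + 1) * (α / z) * exp (-β * z / σ))
        (Set.Ioi 0) ∧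
      ∫ z in Set.Ioi (0:ℝ),
          (exp (β * z * (1 / σ - 1)) * Real.log (exp (β * z * (1 / σ - 1)))
            - exp (β * z * (1 / σ - 1)) + 1) * (α / z) * exp (-β * z / σ) =
        α * (1 / σ - 1 + Real.log σ) :=
  lepingle_memin_integrand_inverse_general α β σ hβ hσ
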